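/- arXiv:1501.06457 — 5 statements merged into one kernel-verified Lean document; each statement's English description precedes it below -/
import Mathlib

section
/- Let N be a normal n×n complex matrix. Then there exists a unitary n×n matrix U such that for every matrix B in the C*-algebra generated by N (equivalently, every polynomial in N and N*), every diagonal entry of U*BU equals the normalized trace τ(B) = (1/n)·tr(B). -/
/-!
The real and imaginary parts `ℜ N`, `ℑ N` of a normal matrix are commuting Hermitian matrices,
so a single unitary `U` diagonalizes both; then `Uᴴ B U` is diagonal for every `B` in the algebra
generated by `N` and `Nᴴ`. A unitary `F` all of whose entries have modulus `1 / √n` (a normalized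
complex Hadamard matrix, e.g. the discrete Fourier matrix) turns every diagonal `D` into a matrix
`Fᴴ D F` with constant diagonal `(1 / n) tr D`, so `U F` works.
-/

open Matrix Module Module.End ComplexStarModule

theorem LinearMap.IsSymmetric.exists_orthonormalBasis_eigenvectors_of_commute
    {𝕜 E ι : Type*} [RCLike 𝕜] [NormedAddCommGroup E] [InnerProductSpace 𝕜 E]
    [FiniteDimensional 𝕜 E] [Fintype ι] {A B : E →ₗ[𝕜] E} (hA : A.IsSymmetric)
    (hB : B.IsSymmetric) (hAB : Commute A B) (hι : finrank 𝕜 E = Fintype.card ι) :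
    ∃ b : OrthonormalBasis ι 𝕜 E, ∀ i, ∃ μ ν : 𝕜, A (b i) = μ • b i ∧ B (b i) = ν • b i := by
  classical
  set V : 𝕜 × 𝕜 → Submodule 𝕜 E := fun μν => eigenspace A μν.2 ⊓ eigenspace B μν.1
  have hV := hA.directSum_isInternal_of_commute hB hAB
  let _ : Fintype {μν // V μν ≠ ⊥} := hV.submodule_iSupIndep.fintypeNeBotOfFiniteDimensional
  have hV' : DirectSum.IsInternal fun μν : {μν // V μν ≠ ⊥} => V μν :=
    DirectSum.isInternal_ne_bot_iff.mpr hV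
  have hVorth := (hA.orthogonalFamily_eigenspace_inf_eigenspace hB).comp
    (Subtype.val_injective (p := fun μν => V μν ≠ ⊥))
  refine ⟨(hV'.subordinateOrthonormalBasis hι hVorth).reindex (Fintype.equivFin ι).symm,
    fun i => ?_⟩
  obtain ⟨hμ, hν⟩ := hV'.subordinateOrthonormalBasis_subordinate hι (Fintype.equivFin ι i) hVorth
  rw [OrthonormalBasis.reindex_apply, Equiv.symm_symm]
  exact ⟨_, _, mem_eigenspace_iff.mp hμ, mem_eigenspace_iff.mp hν⟩

namespace Matrix

variable {ι : Type*} [Fintype ι] [DecidableEq ι]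

section RCLike

variable {𝕜 : Type*} [RCLike 𝕜]

noncomputable def _root_.OrthonormalBasis.toUnitaryMatrix
    (b : OrthonormalBasis ι 𝕜 (EuclideanSpace 𝕜 ι)) : unitaryGroup ι 𝕜 :=
  ⟨(EuclideanSpace.basisFun ι 𝕜).toBasis.toMatrix b.toBasis,
    (EuclideanSpace.basisFun ι 𝕜).toMatrix_orthonormalBasis_mem_unitary b⟩

noncomputable def conjDiagonalSubalgebra (U : unitaryGroup ι 𝕜) : Subalgebra 𝕜 (Matrix ι ι 𝕜) :=
  (diagonalAlgHom 𝕜).range.comap (Unitary.conjStarAlgAut 𝕜 _ (star U)).toAlgEquiv.toAlgHom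

theorem mem_conjDiagonalSubalgebra {U : unitaryGroup ι 𝕜} {A : Matrix ι ι 𝕜} :
    A ∈ conjDiagonalSubalgebra U ↔
      ∃ d, diagonal d = star (U : Matrix ι ι 𝕜) * A * (U : Matrix ι ι 𝕜) := by
  simp [conjDiagonalSubalgebra]

theorem mem_conjDiagonalSubalgebra_toUnitaryMatrix
    {b : OrthonormalBasis ι 𝕜 (EuclideanSpace 𝕜 ι)} {A : Matrix ι ι 𝕜}
    (hb : ∀ i, ∃ μ : 𝕜, toEuclideanLin A (b i) = μ • b i) :
    A ∈ conjDiagonalSubalgebra b.toUnitaryMatrix := by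
  choose d hd using hb
  set U := b.toUnitaryMatrix
  have hAU : A * U = U * diagonal d := by
    ext k i
    rw [mul_diagonal]
    simp only [U, OrthonormalBasis.toUnitaryMatrix, mul_apply, Basis.toMatrix_apply,
      OrthonormalBasis.coe_toBasis_repr_apply, EuclideanSpace.basisFun_repr,
      OrthonormalBasis.coe_toBasis]
    simpa [mulVec, dotProduct, mul_comm] using congr($(hd i) k)
  refine mem_conjDiagonalSubalgebra.mpr ⟨d, ?_⟩
  rw [mul_assoc, hAU, ← mul_assoc, Unitary.coe_star_mul_self, one_mul]

theorem IsHermitian.exists_unitary_mem_conjDiagonalSubalgebra_of_commute {A B : Matrix ι ι 𝕜}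
    (hA : A.IsHermitian) (hB : B.IsHermitian) (hAB : Commute A B) :
    ∃ U, A ∈ conjDiagonalSubalgebra U ∧ B ∈ conjDiagonalSubalgebra U := by
  obtain ⟨b, hb⟩ :=
    (isSymmetric_toEuclideanLin_iff.mpr hA).exists_orthonormalBasis_eigenvectors_of_commute
      (isSymmetric_toEuclideanLin_iff.mpr hB) (hAB.map (toLpLinAlgEquiv 2))
      finrank_euclideanSpace
  choose μ ν hμ hν using hb
  exact ⟨b.toUnitaryMatrix, mem_conjDiagonalSubalgebra_toUnitaryMatrix fun i => ⟨μ i, hμ i⟩,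
    mem_conjDiagonalSubalgebra_toUnitaryMatrix fun i => ⟨ν i, hν i⟩⟩

end RCLike

theorem exists_unitary_adjoin_le_conjDiagonalSubalgebra (N : Matrix ι ι ℂ) [IsStarNormal N] :
    ∃ U, Algebra.adjoin ℂ {N, Nᴴ} ≤ conjDiagonalSubalgebra U := by
  obtain ⟨U, hre, him⟩ := IsHermitian.exists_unitary_mem_conjDiagonalSubalgebra_of_commute
    (ℜ N).2.isHermitian (ℑ N).2.isHermitian (Commute.realPart_imaginaryPart N)
  have hN : N = ℜ N + Complex.I • (ℑ N : Matrix ι ι ℂ) :=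
    (realPart_add_I_smul_imaginaryPart N).symm
  have hNH : Nᴴ = ℜ N - Complex.I • (ℑ N : Matrix ι ι ℂ) := by
    conv_lhs => rw [hN]
    rw [conjTranspose_add, conjTranspose_smul, (ℜ N).2.isHermitian.eq, (ℑ N).2.isHermitian.eq]
    simp [sub_eq_add_neg]
  refine ⟨U, Algebra.adjoin_le ?_⟩
  rintro _ (rfl | rfl)
  · rw [hN]
    exact add_mem hre (Subalgebra.smul_mem _ him _)
  · rw [hNH]
    exact sub_mem hre (Subalgebra.smul_mem _ him _)

theorem _root_.AddChar.isHadamard_of_isPrimitive {R 𝕜 : Type*} [CommRing R] [Fintype R]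
    [DecidableEq R] [RCLike 𝕜] {ψ : AddChar R 𝕜} (hψ : ψ.IsPrimitive) :
    (Matrix.of fun x y : R => ψ (x * y)).IsHadamard := by
  refine .of_mul_conjTranspose (fun x y => ?_) ?_ (.of_ne_zero (by simp))
  · rw [of_apply, Unitary.mem_iff, RCLike.star_def, ← AddChar.map_neg_eq_conj,
      ← AddChar.map_add_eq_mul, ← AddChar.map_add_eq_mul]
    simp
  · have hrow : ∀ x y z : R, ψ (x * z) * star (ψ (y * z)) = ψ (z * (x - y)) := fun x y z => by
      rw [RCLike.star_def, ← AddChar.map_neg_eq_conj, ← AddChar.map_add_eq_mul]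
      ring_nf
    ext x y
    rw [Matrix.mul_apply, Matrix.smul_apply, Matrix.one_apply]
    simp only [of_apply, conjTranspose_apply, hrow, AddChar.sum_mulShift _ hψ, sub_eq_zero]
    split_ifs <;> simp

variable (ι) in
theorem exists_isHadamard : ∃ A : Matrix ι ι ℂ, A.IsHadamard := by
  cases isEmpty_or_nonempty ι
  · exact ⟨0, ⟨isEmptyElim, Subsingleton.elim _ _, Subsingleton.elim _ _⟩⟩
  · have : NeZero (Fintype.card ι) := ⟨Fintype.card_ne_zero⟩
    let e : ι ≃ ZMod (Fintype.card ι) := (Fintype.equivFin ι).trans (ZMod.finEquiv _).toEquiv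
    exact ⟨_, (AddChar.isHadamard_of_isPrimitive (ZMod.isPrimitive_stdAddChar _)).reindex
      e.symm e.symm⟩

theorem IsHadamard.conjTranspose_mul_diagonal_mul_apply_self {R : Type*} [CommSemiring R]
    [StarRing R] {A : Matrix ι ι R} (hA : A.IsHadamard) (d : ι → R) (j : ι) :
    (Aᴴ * diagonal d * A) j j = ∑ k, d k := by
  rw [mul_apply]
  simp only [mul_diagonal, conjTranspose_apply]
  refine Finset.sum_congr rfl fun k _ => ?_
  rw [mul_right_comm, Unitary.star_mul_self_of_mem (hA.apply_mem k j), one_mul]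

variable (ι) in
theorem exists_mem_unitaryGroup_conjTranspose_mul_diagonal_mul_apply_self [Nonempty ι] :
    ∃ F ∈ unitaryGroup ι ℂ, ∀ (d : ι → ℂ) (j : ι),
      (Fᴴ * diagonal d * F) j j = (Fintype.card ι : ℂ)⁻¹ * trace (diagonal d) := by
  obtain ⟨A, hA⟩ := exists_isHadamard ι
  let c : ℂ := ((√(Fintype.card ι) : ℝ) : ℂ)⁻¹
  have hc : star c * c = (Fintype.card ι : ℂ)⁻¹ := by
    rw [Complex.star_def, map_inv₀, Complex.conj_ofReal, ← mul_inv, ← Complex.ofReal_mul,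
      Real.mul_self_sqrt (Nat.cast_nonneg _), Complex.ofReal_natCast]
  refine ⟨c • A, ?_, fun d j => ?_⟩
  · rw [mem_unitaryGroup_iff', star_eq_conjTranspose, conjTranspose_smul, smul_mul_smul_comm,
      hA.conjTranspose_mul, hc, smul_smul, inv_mul_cancel₀ (by simp), one_smul]
  · rw [conjTranspose_smul, smul_mul_assoc, smul_mul_assoc, mul_smul_comm, smul_smul, hc,
      smul_apply, hA.conjTranspose_mul_diagonal_mul_apply_self, trace_diagonal, smul_eq_mul]

end Matrix

/-- For a normal matrix `N`, there is a unitary `U` such that for every `B`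
in the (C*-)algebra generated by `N` and `Nᴴ`, every diagonal entry of
`Uᴴ * B * U` equals the normalized trace `(1/n) tr B`. -/
theorem normal_matrix_constant_diagonal (n : ℕ) (hn : 0 < n)
    (N : Matrix (Fin n) (Fin n) ℂ) (hN : N * Nᴴ = Nᴴ * N) :
    ∃ U ∈ Matrix.unitaryGroup (Fin n) ℂ,
      ∀ B ∈ Algebra.adjoin ℂ ({N, Nᴴ} : Set (Matrix (Fin n) (Fin n) ℂ)),
        ∀ j : Fin n, (Uᴴ * B * U) j j = (1 / n : ℂ) * Matrix.trace B := by
  have : IsStarNormal N := ⟨hN.symm⟩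
  have : Nonempty (Fin n) := ⟨⟨0, hn⟩⟩
  obtain ⟨U, hU⟩ := exists_unitary_adjoin_le_conjDiagonalSubalgebra N
  obtain ⟨F, hF, hFd⟩ := exists_mem_unitaryGroup_conjTranspose_mul_diagonal_mul_apply_self (Fin n)
  refine ⟨U * F, mul_mem U.2 hF, fun B hB j => ?_⟩
  obtain ⟨d, hd⟩ := mem_conjDiagonalSubalgebra.mp (hU hB)
  have hconj : (U * F : Matrix (Fin n) (Fin n) ℂ)ᴴ * B * (U * F) = Fᴴ * diagonal d * F := by
    rw [hd, conjTranspose_mul, ← star_eq_conjTranspose (U : Matrix (Fin n) (Fin n) ℂ)]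
    simp only [mul_assoc]
  have htrace : trace (diagonal d) = trace B := by
    rw [hd, trace_mul_cycle, Unitary.mul_star_self_of_mem U.2, one_mul]
  rw [hconj, hFd, htrace, Fintype.card_fin, one_div]
end

section
/- With N = diag(0,1,i) and A = diag(1/2, i/2, (1+i)/2), there is no unitary 3×3 matrix U such that the diagonal of U*NU equals A, even though every entry of A lies in the convex hull of {0, 1, i}. -/
open Matrix Complex

/-- With `N = diag(0,1,i)` and `A = diag(1/2, i/2, (1+i)/2)`, every diagonal entry
of `A` lies in the convex hull of `{0, 1, i}`, yet there is no unitary `U` such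
that the diagonal of `Uᴴ * N * U` equals the diagonal of `A`. -/
theorem no_unitary_with_diagonal
    (N A : Matrix (Fin 3) (Fin 3) ℂ)
    (hN : N = Matrix.diagonal ![0, 1, Complex.I])
    (hA : A = Matrix.diagonal ![1 / 2, Complex.I / 2, (1 + Complex.I) / 2]) :
    (∀ j : Fin 3, A j j ∈ convexHull ℝ ({0, 1, Complex.I} : Set ℂ)) ∧
      ¬ ∃ U ∈ Matrix.unitaryGroup (Fin 3) ℂ,
          ∀ j : Fin 3, (Uᴴ * N * U) j j = A j j := by
  subst hN hA
  constructor
  · have seg : ∀ x y : ℂ, x ∈ ({0, 1, Complex.I} : Set ℂ) → y ∈ ({0, 1, Complex.I} : Set ℂ) →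
        (x + y) / 2 ∈ convexHull ℝ ({0, 1, Complex.I} : Set ℂ) := by
      intro x y hx hy
      apply segment_subset_convexHull (𝕜 := ℝ) hx hy
      exact ⟨1/2, 1/2, by norm_num, by norm_num, by norm_num, by
        simp [Complex.real_smul]; ring⟩
    intro j
    fin_cases j <;> simp [Matrix.diagonal]
    · simpa using seg 0 1 (by simp) (by simp)
    · simpa using seg 0 Complex.I (by simp) (by simp)
    · simpa [add_div] using seg 1 Complex.I (by simp) (by simp)
  · rintro ⟨U, hU, h⟩
    have h0 := h 0
    have h1 := h 1
    simp [Matrix.mul_apply, Fin.sum_univ_three, Matrix.diagonal] at h0 h1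
    have hUU : (star U * U) = 1 := hU.1
    have o00 := congrFun (congrFun hUU 0) 0
    have o01 := congrFun (congrFun hUU 0) 1
    have o11 := congrFun (congrFun hUU 1) 1
    simp [Matrix.mul_apply, Fin.sum_univ_three, Matrix.one_apply, Matrix.star_apply]
      at o00 o01 o11
    have h0' : (normSq (U 1 0) : ℂ) + normSq (U 2 0) * I = 2⁻¹ := by
      rw [normSq_eq_conj_mul_self, normSq_eq_conj_mul_self, ← h0]; ring
    have h1' : (normSq (U 1 1) : ℂ) + normSq (U 2 1) * I = I / 2 := by
      rw [normSq_eq_conj_mul_self, normSq_eq_conj_mul_self, ← h1]; ring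
    rw [Complex.ext_iff] at h0' h1'
    simp at h0' h1'
    obtain ⟨ha, hb⟩ := h0'
    obtain ⟨hc, hd⟩ := h1'
    rw [hc, hb] at o01
    simp at o01
    have hU00 : normSq (U 0 0) = 1/2 := by
      have : (normSq (U 0 0) : ℂ) + normSq (U 1 0) + normSq (U 2 0) = 1 := by
        rw [normSq_eq_conj_mul_self, normSq_eq_conj_mul_self, normSq_eq_conj_mul_self, ← o00]
      rw [Complex.ext_iff] at this
      simp at this
      simp [ha, hb] at this; linarith
    have hU01 : normSq (U 0 1) = 1/2 := by
      have : (normSq (U 0 1) : ℂ) + normSq (U 1 1) + normSq (U 2 1) = 1 := by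
        rw [normSq_eq_conj_mul_self, normSq_eq_conj_mul_self, normSq_eq_conj_mul_self, ← o11]
      rw [Complex.ext_iff] at this
      simp at this
      simp [hc, hd] at this; linarith
    rcases o01 with h' | h'
    · rw [show U 0 0 = 0 from by simpa [Complex.ext_iff] using h'] at hU00
      simp at hU00
    · rw [h'] at hU01; simp at hU01
end

section
/- Given ε > 0, n ∈ ℕ, and p_1, …, p_n ∈ (0,1) with ∑_{k=1}^n p_k = 1, there exists a family of rationals q_j^{(k)} ∈ [0,1] ∩ ℚ indexed by j ∈ ℕ and k ∈ {1,…,n} such that ∑_{j≥1} q_j^{(k)} = p_k for all k, and |p_k − q_j^{(k)}/∑_{i=1}^n q_j^{(i)}| < ε for all j ∈ ℕ and all k. -/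
open Finset

set_option maxHeartbeats 1600000 in
/-- Given `p k ∈ (0,1)` summing to `1`, there are rationals `q j k ∈ [0,1]`
with `∑_{j ≥ 1} q j k = p k` for each `k`, and such that for every `j`, the
proportion `q j k / ∑ i, q j i` is within `ε` of `p k`. -/
theorem rational_partition_approx (ε : ℝ) (hε : 0 < ε) (n : ℕ)
    (p : Fin n → ℝ) (hp : ∀ k, p k ∈ Set.Ioo (0 : ℝ) 1)
    (hsum : ∑ k, p k = 1) :
    ∃ q : ℕ → Fin n → ℚ,
      (∀ j k, (q j k : ℝ) ∈ Set.Icc (0 : ℝ) 1) ∧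
      (∀ k, HasSum (fun j : ℕ => (q j k : ℝ)) (p k)) ∧
      (∀ j : ℕ, ∀ k : Fin n,
        |p k - (q j k : ℝ) / (∑ i, (q j i : ℝ))| < ε) := by
  have hn : 0 < n := by
    rcases Nat.eq_zero_or_pos n with h | h
    · subst h; simp at hsum
    · exact h
  have hne : (Finset.univ : Finset (Fin n)).Nonempty :=
    ⟨⟨0, hn⟩, mem_univ _⟩
  set m : ℝ := univ.inf' hne p with hm
  have hm0 : 0 < m := by
    rw [hm, Finset.lt_inf'_iff]
    exact fun k _ => (hp k).1
  have hmle : ∀ k, m ≤ p k := fun k => inf'_le _ (mem_univ k)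
  have hn1 : (1 : ℝ) ≤ n := by exact_mod_cast hn
  set η : ℝ := min (ε / (13 * n)) (min m (1 / (6 * n))) with hηdef
  have hη0 : 0 < η := by
    apply lt_min (by positivity) (lt_min hm0 (by positivity))
  have hη1 : η ≤ ε / (13 * n) := min_le_left _ _
  have hη2 : ∀ k, η ≤ p k := fun k =>
    le_trans (le_trans (min_le_right _ _) (min_le_left _ _)) (hmle k)
  have hη3 : n * η ≤ 1 / 6 := by
    have h : η ≤ 1 / (6 * (n : ℝ)) := (min_le_right _ _).trans (min_le_right _ _)
    have hn0 : (0:ℝ) < n := by exact_mod_cast hn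
    rw [le_div_iff₀ (by positivity)] at h
    nlinarith
  have hη4 : η ≤ 1 / 6 := by nlinarith
  set c : ℕ → ℝ := fun j => (1 / 2 : ℝ) ^ j with hcdef
  have hc0 : ∀ j, 0 < c j := fun j => pow_pos (by norm_num) j
  have hcs : ∀ j, c (j + 1) = c j / 2 := fun j => by
    simp only [hcdef, pow_succ]; ring
  have hcle : ∀ j, c j ≤ 1 := fun j => pow_le_one₀ (by norm_num) (by norm_num)
  have hc1 : ∀ j, c (j + 1) ≤ 1 / 2 := fun j => by
    rw [hcs j]; linarith [hcle j]
  -- choose the rationals T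
  have hex : ∀ j : ℕ, ∀ k : Fin n, ∃ r : ℚ,
      (1 - c (j + 1)) * p k - η * c (j + 1) < (r : ℝ) ∧
      (r : ℝ) < (1 - c (j + 1)) * p k := by
    intro j k
    have : (1 - c (j + 1)) * p k - η * c (j + 1) < (1 - c (j + 1)) * p k := by
      nlinarith [hc0 (j + 1), hη0]
    obtain ⟨r, hr1, hr2⟩ := exists_rat_btwn this
    exact ⟨r, hr1, hr2⟩
  choose f hf1 hf2 using hex
  set T : ℕ → Fin n → ℚ := fun j k =>
    match j with
    | 0 => 0
    | Nat.succ j => f j k with hTdef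
  have hT0 : ∀ k, T 0 k = 0 := fun _ => rfl
  have hT1 : ∀ j k, (1 - c j) * p k - η * c j < (T j k : ℝ) := by
    intro j k
    cases j with
    | zero =>
      simp only [hTdef, hcdef, pow_zero]
      push_cast
      linarith
    | succ j => exact hf1 j k
  have hT2 : ∀ j k, (T j k : ℝ) ≤ (1 - c j) * p k := by
    intro j k
    cases j with
    | zero =>
      simp only [hTdef, hcdef, pow_zero]
      push_cast
      linarith
    | succ j => exact le_of_lt (hf2 j k)
  set q : ℕ → Fin n → ℚ := fun j k => T (j + 1) k - T j k with hqdef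
  have hq1 : ∀ j k, c (j + 1) * (p k - η) < (q j k : ℝ) := by
    intro j k
    have h1 := hT1 (j + 1) k
    have h2 := hT2 j k
    have h3 := hcs j
    simp only [hqdef]
    push_cast
    rw [h3] at h1 ⊢
    nlinarith
  have hq2 : ∀ j k, (q j k : ℝ) < c (j + 1) * (p k + 2 * η) := by
    intro j k
    have h1 := hT2 (j + 1) k
    have h2 := hT1 j k
    have h3 := hcs j
    simp only [hqdef]
    push_cast
    rw [h3] at h1 ⊢
    nlinarith
  have hq0 : ∀ j k, (0 : ℝ) ≤ (q j k : ℝ) := by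
    intro j k
    have := hq1 j k
    nlinarith [hc0 (j + 1), hη2 k]
  refine ⟨q, ?_, ?_, ?_⟩
  · -- membership in [0,1]
    intro j k
    refine ⟨hq0 j k, ?_⟩
    have h1 := hq2 j k
    have h2 := hc1 j
    have h3 := (hp k).2
    nlinarith [hc0 (j + 1)]
  · -- HasSum
    intro k
    rw [hasSum_iff_tendsto_nat_of_nonneg (fun j => hq0 j k)]
    have hpart : ∀ N, ∑ j ∈ Finset.range N, (q j k : ℝ) = (T N k : ℝ) := by
      intro N
      have := Finset.sum_range_sub (fun j => (T j k : ℝ)) N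
      simp only [hqdef]
      push_cast
      rw [this, hT0 k]
      push_cast
      ring
    simp only [hpart]
    rw [tendsto_iff_norm_sub_tendsto_zero]
    have hb : ∀ N, ‖(T N k : ℝ) - p k‖ ≤ 2 * c N := by
      intro N
      rw [Real.norm_eq_abs, abs_le]
      have h1 := hT1 N k
      have h2 := hT2 N k
      have h3 := hc0 N
      have h4 := (hp k).2
      have h5 := (hp k).1
      constructor <;> nlinarith [hη4]
    have hlim : Filter.Tendsto (fun N => 2 * c N) Filter.atTop (nhds 0) := by
      have h := (tendsto_pow_atTop_nhds_zero_of_lt_one (by norm_num : (0:ℝ) ≤ 1/2)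
        (by norm_num : (1/2 : ℝ) < 1)).const_mul (2:ℝ)
      rw [mul_zero] at h
      simpa [hcdef, one_div] using h
    exact squeeze_zero (fun N => norm_nonneg _) hb hlim
  · -- ratio bound
    intro j k
    set d : ℝ := c (j + 1) with hd
    have hd0 : 0 < d := hc0 (j + 1)
    set S : ℝ := ∑ i, (q j i : ℝ) with hS
    have hsum' : ∑ i, d * (p i - η) = d * (1 - n * η) := by
      rw [← Finset.mul_sum, Finset.sum_sub_distrib, hsum, Finset.sum_const,
        Finset.card_univ, Fintype.card_fin, nsmul_eq_mul]
    have hsum'' : ∑ i, d * (p i + 2 * η) = d * (1 + 2 * n * η) := by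
      rw [← Finset.mul_sum, Finset.sum_add_distrib, hsum, Finset.sum_const,
        Finset.card_univ, Fintype.card_fin, nsmul_eq_mul]
      ring
    have hSlb : d * (1 - n * η) ≤ S := by
      rw [hS, ← hsum']
      exact Finset.sum_le_sum (fun i _ => (hq1 j i).le)
    have hSub : S ≤ d * (1 + 2 * n * η) := by
      rw [hS, ← hsum'']
      exact Finset.sum_le_sum (fun i _ => (hq2 j i).le)
    have hS0 : 0 < S := by nlinarith [hη3, hd0]
    have hηε : η * (13 * n) ≤ ε := (le_div_iff₀ (by positivity)).mp hη1
    have hnη0 : 0 < n * η := by positivity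
    have key : |p k * S - (q j k : ℝ)| ≤ 3 * n * η * d := by
      have hk1 := (hp k).1
      have hk2 := (hp k).2
      have h1 := hq1 j k
      have h2 := hq2 j k
      have h3 : p k * (d * (1 - n * η)) ≤ p k * S :=
        mul_le_mul_of_nonneg_left hSlb hk1.le
      have h4 : p k * S ≤ p k * (d * (1 + 2 * n * η)) :=
        mul_le_mul_of_nonneg_left hSub hk1.le
      have hnηd : (0:ℝ) ≤ n * η * d := by positivity
      have e1 : (n * η * d) * p k ≤ n * η * d := mul_le_of_le_one_right hnηd hk2.le
      have e2 : η * d ≤ n * η * d := by nlinarith [mul_nonneg hη0.le hd0.le]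
      rw [abs_le]
      constructor
      · linarith [h2, h3, e1, e2]
      · linarith [h1, h4, e1, e2]
    have hεS : 3 * n * η * d < ε * S := by
      have h5 : ε * (d * (1 - n * η)) ≤ ε * S :=
        mul_le_mul_of_nonneg_left hSlb hε.le
      have hnηε : 13 * (n * η) ≤ ε := by linarith [hηε]
      have f1 : 13 * (n * η) * d ≤ ε * d := mul_le_mul_of_nonneg_right hnηε hd0.le
      have f2 : ε * d * (n * η) ≤ ε * d * (1 / 6) :=
        mul_le_mul_of_nonneg_left hη3 (by positivity)
      have h6 : (0:ℝ) < n * η * d := by positivity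
      linarith [h5, f1, f2, h6]
    have hrw : p k - (q j k : ℝ) / S = (p k * S - (q j k : ℝ)) / S := by
      field_simp
    rw [hrw, abs_div, abs_of_pos hS0, div_lt_iff₀ hS0]
    linarith
end

section
/- Given ε > 0 and β_1,…,β_n ∈ [0,1] with ∑β_k = 1, there exists m ∈ ℕ and pairwise orthogonal projections P_1,…,P_n ∈ M_m(ℂ) summing to the identity such that every diagonal entry of P_k lies within ε of β_k, for each k. -/
/-!
Choose `m > 1 / ε` and round the numbers `m β k` to natural numbers `a k` with the same sum `m`,
each off by less than `1`. Splitting `Fin m` into blocks of sizes `a k`, the diagonal projections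
onto the blocks form an orthogonal partition of unity whose `k`-th member has trace `a k`.
Conjugating by a unitary whose entries all have modulus `1 / √m` (the normalized discrete Fourier
matrix) keeps this structure and spreads the trace evenly over the diagonal, so every diagonal
entry of the `k`-th projection becomes `a k / m`, which is within `1 / m < ε` of `β k`.
-/

open Matrix Finset

theorem Nat.abs_floor_add_sub_floor_sub_lt_one {u v : ℝ} (hu : 0 ≤ u) (hv : 0 ≤ v) :
    |((⌊u + v⌋₊ - ⌊u⌋₊ : ℕ) : ℝ) - v| < 1 := by
  rw [Nat.cast_sub (Nat.floor_mono (le_add_of_nonneg_right hv)), abs_sub_lt_iff]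
  have := Nat.floor_le hu
  have := Nat.floor_le (add_nonneg hu hv)
  have := Nat.lt_floor_add_one u
  have := Nat.lt_floor_add_one (u + v)
  constructor <;> linarith

theorem abs_mul_inv_sub_lt_inv {x y m : ℝ} (hm : 0 < m) (h : |x - m * y| < 1) :
    |x * m⁻¹ - y| < m⁻¹ := by
  rw [show x * m⁻¹ - y = (x - m * y) * m⁻¹ by field_simp, abs_mul, abs_of_pos (inv_pos.2 hm)]
  exact mul_lt_of_lt_one_left (inv_pos.2 hm) h

/-- `a k` is the increment of `⌊·⌋₊` along the partial sums of `x`. -/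
theorem exists_nat_sum_eq_floor_sum_abs_sub_lt_one {n : ℕ} (x : Fin n → ℝ) (hx : ∀ k, 0 ≤ x k) :
    ∃ a : Fin n → ℕ, ∑ k, a k = ⌊∑ k, x k⌋₊ ∧ ∀ k, |(a k : ℝ) - x k| < 1 := by
  induction n with
  | zero => exact ⟨finZeroElim, by simp, finZeroElim⟩
  | succ n ih =>
    obtain ⟨a, ha_sum, ha⟩ := ih (fun k => x k.castSucc) fun k => hx _
    have hinit : 0 ≤ ∑ k : Fin n, x k.castSucc := sum_nonneg fun k _ => hx _
    refine ⟨Fin.snoc a (⌊∑ k, x k⌋₊ - ⌊∑ k : Fin n, x k.castSucc⌋₊), ?_, Fin.lastCases ?_ ?_⟩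
    · rw [Fin.sum_univ_castSucc, Fin.sum_univ_castSucc x]
      simp only [Fin.snoc_castSucc, Fin.snoc_last, ha_sum]
      exact Nat.add_sub_cancel' (Nat.floor_mono (le_add_of_nonneg_right (hx _)))
    · rw [Fin.snoc_last, Fin.sum_univ_castSucc x]
      exact Nat.abs_floor_add_sub_floor_sub_lt_one hinit (hx _)
    · intro k
      rw [Fin.snoc_castSucc]
      exact ha k

theorem exists_card_filter_eq {ι κ : Type*} [Fintype ι] [Fintype κ] [DecidableEq κ]
    (a : κ → ℕ) (ha : ∑ k, a k = Fintype.card ι) :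
    ∃ f : ι → κ, ∀ k, #{i | f i = k} = a k := by
  let e : ι ≃ Σ k, Fin (a k) := Fintype.equivOfCardEq (by simp [ha])
  refine ⟨fun i => (e i).1, fun k => ?_⟩
  rw [← Fintype.card_subtype, ← Fintype.card_fin (a k)]
  exact Fintype.card_congr ((e.subtypeEquiv fun _ => Iff.rfl).trans (Equiv.sigmaSubtype k))

namespace ZMod

variable (N : ℕ) [NeZero N]

noncomputable def unitaryDFT : Matrix (ZMod N) (ZMod N) ℂ :=
  of fun j k => (√N : ℂ)⁻¹ * stdAddChar (j * k)

theorem normSq_unitaryDFT_apply (j k : ZMod N) :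
    Complex.normSq (unitaryDFT N j k) = (N : ℝ)⁻¹ := by
  simp [unitaryDFT, Complex.normSq_eq_norm_sq, AddChar.norm_apply]

theorem unitaryDFT_mem_unitaryGroup : unitaryDFT N ∈ unitaryGroup (ZMod N) ℂ := by
  rw [mem_unitaryGroup_iff]
  ext i j
  have hs : (√N : ℂ)⁻¹ * star (√N : ℂ)⁻¹ = (N : ℂ)⁻¹ := by
    rw [Complex.star_def, map_inv₀, Complex.conj_ofReal, ← mul_inv, ← Complex.ofReal_mul,
      Real.mul_self_sqrt (Nat.cast_nonneg N), Complex.ofReal_natCast]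
  calc (unitaryDFT N * star (unitaryDFT N)) i j
      = (N : ℂ)⁻¹ * ∑ k, stdAddChar (k * (i - j)) := by
        simp only [mul_apply, star_apply, unitaryDFT, of_apply, star_mul', mul_sum]
        refine sum_congr rfl fun k _ => ?_
        rw [mul_comm k, sub_mul, sub_eq_add_neg, AddChar.map_add_eq_mul,
          AddChar.map_neg_eq_conj, ← hs, Complex.star_def]
        ring
    _ = (1 : Matrix (ZMod N) (ZMod N) ℂ) i j := by
        simp only [AddChar.sum_mulShift _ (isPrimitive_stdAddChar N), sub_eq_zero, one_apply]
        split_ifs <;> simp [NeZero.ne]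

end ZMod

theorem exists_mem_unitaryGroup_normSq_eq (ι : Type*) [Fintype ι] [DecidableEq ι] [Nonempty ι] :
    ∃ U ∈ unitaryGroup ι ℂ, ∀ i j, Complex.normSq (U i j) = (Fintype.card ι : ℝ)⁻¹ := by
  have : NeZero (Fintype.card ι) := ⟨Fintype.card_ne_zero⟩
  let e : ι ≃ ZMod (Fintype.card ι) := (Fintype.equivFin ι).trans (ZMod.finEquiv _).toEquiv
  refine ⟨(ZMod.unitaryDFT _).submatrix e e, ?_, fun i j => ZMod.normSq_unitaryDFT_apply _ _ _⟩
  rw [mem_unitaryGroup_iff, star_eq_conjTranspose, conjTranspose_submatrix, submatrix_mul_equiv,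
    ← star_eq_conjTranspose, mem_unitaryGroup_iff.1 (ZMod.unitaryDFT_mem_unitaryGroup _),
    submatrix_one_equiv]

structure IsProjectionPartition {R κ : Type*} [Semiring R] [Star R] [Fintype κ] (P : κ → R) :
    Prop where
  isStarProjection : ∀ k, IsStarProjection (P k)
  pairwise_mul_eq_zero : Pairwise fun j k => P j * P k = 0
  sum_eq_one : ∑ k, P k = 1

theorem IsProjectionPartition.map {R S κ F : Type*} [Semiring R] [Star R] [Semiring S] [Star S]
    [Fintype κ] [FunLike F R S] [RingHomClass F R S] [StarHomClass F R S] {P : κ → R}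
    (hP : IsProjectionPartition P) (φ : F) : IsProjectionPartition fun k => φ (P k) where
  isStarProjection k := (hP.isStarProjection k).map φ
  pairwise_mul_eq_zero j k hjk := by
    simp only [← map_mul, hP.pairwise_mul_eq_zero hjk, map_zero]
  sum_eq_one := by rw [← map_sum, hP.sum_eq_one, map_one]

section fiberProjection

variable {ι κ R : Type*} [DecidableEq ι] [DecidableEq κ]

def fiberProjection [Zero R] [One R] (f : ι → κ) (k : κ) : Matrix ι ι R :=
  diagonal fun i => if f i = k then 1 else 0

theorem fiberProjection_mul_fiberProjection [Fintype ι] [Semiring R] (f : ι → κ) (j k : κ) :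
    (fiberProjection f j * fiberProjection f k : Matrix ι ι R) =
      if j = k then fiberProjection f k else 0 := by
  rw [fiberProjection, fiberProjection, diagonal_mul_diagonal]
  split_ifs with hjk
  · subst hjk
    congr 1
    ext i
    split_ifs <;> simp
  · rw [← diagonal_zero]
    congr 1
    ext i
    split_ifs with hj hk <;> simp_all

theorem isSelfAdjoint_fiberProjection [Semiring R] [StarRing R] (f : ι → κ) (k : κ) :
    IsSelfAdjoint (fiberProjection (R := R) f k) := by
  rw [IsSelfAdjoint, fiberProjection, star_eq_conjTranspose, diagonal_conjTranspose]
  congr 1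
  ext i
  by_cases h : f i = k <;> simp [h]

theorem sum_fiberProjection [Fintype κ] [Semiring R] (f : ι → κ) :
    ∑ k, (fiberProjection f k : Matrix ι ι R) = 1 := by
  ext a b
  by_cases hab : a = b <;> simp [Matrix.sum_apply, fiberProjection, one_apply, hab]

theorem isProjectionPartition_fiberProjection [Fintype ι] [Fintype κ] [Semiring R] [StarRing R]
    (f : ι → κ) : IsProjectionPartition (fiberProjection (R := R) f) where
  isStarProjection k :=
    ⟨by rw [IsIdempotentElem, fiberProjection_mul_fiberProjection, if_pos rfl],
      isSelfAdjoint_fiberProjection f k⟩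
  pairwise_mul_eq_zero j k hjk := by
    simp only [fiberProjection_mul_fiberProjection, if_neg hjk]
  sum_eq_one := sum_fiberProjection f

theorem mul_fiberProjection_mul_star_apply_self [Fintype ι] {U : Matrix ι ι ℂ} {c : ℝ}
    (f : ι → κ) (k : κ) (i : ι) (hU : ∀ j, Complex.normSq (U i j) = c) :
    (U * fiberProjection f k * star U : Matrix ι ι ℂ) i i = #{j | f j = k} * c := by
  rw [mul_apply]
  simp only [fiberProjection, mul_diagonal, star_apply]
  calc ∑ j, U i j * (if f j = k then 1 else 0) * star (U i j)
      = ∑ j, if f j = k then (c : ℂ) else 0 := by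
        refine sum_congr rfl fun j _ => ?_
        rw [mul_right_comm, Complex.star_def, Complex.mul_conj, hU]
        split_ifs <;> simp
    _ = #{j | f j = k} * c := by rw [sum_ite, sum_const_zero, add_zero, sum_const, nsmul_eq_mul]

end fiberProjection

/-- Approximate carpenter lemma, constant-diagonal case: given `β k ∈ [0,1]`
summing to `1`, there exist pairwise orthogonal projections in `M_m(ℂ)` summing
to the identity, each of whose diagonal entries is within `ε` of `β k`. -/
theorem matrix_constant_diagonal_approx (ε : ℝ) (hε : 0 < ε) (n : ℕ)
    (β : Fin n → ℝ) (hβ : ∀ k, β k ∈ Set.Icc (0 : ℝ) 1) (hβsum : ∑ k, β k = 1) :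
    ∃ (m : ℕ), 0 < m ∧ ∃ P : Fin n → Matrix (Fin m) (Fin m) ℂ,
      (∀ k, (P k)ᴴ = P k ∧ P k * P k = P k) ∧
      (∀ j k, j ≠ k → P j * P k = 0) ∧
      (∑ k, P k = 1) ∧
      (∀ k, ∀ i : Fin m, ‖P k i i - (β k : ℂ)‖ < ε) := by
  set m := ⌈ε⁻¹⌉₊ + 1
  have hm : (0 : ℝ) < m := by positivity
  have hmε : (m : ℝ)⁻¹ < ε :=
    inv_lt_of_inv_lt₀ hε (by push_cast [m]; linarith [Nat.le_ceil ε⁻¹])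
  obtain ⟨a, ha_sum, ha⟩ := exists_nat_sum_eq_floor_sum_abs_sub_lt_one (fun k => m * β k)
    fun k => mul_nonneg hm.le (hβ k).1
  rw [← mul_sum, hβsum, mul_one, Nat.floor_natCast] at ha_sum
  obtain ⟨f, hf⟩ := exists_card_filter_eq (ι := Fin m) a (by rw [ha_sum, Fintype.card_fin])
  obtain ⟨U, hU, hU_normSq⟩ := exists_mem_unitaryGroup_normSq_eq (Fin m)
  have hP := (isProjectionPartition_fiberProjection (R := ℂ) f).map
    (Unitary.conjStarAlgAut ℂ _ ⟨U, hU⟩)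
  simp only [Unitary.conjStarAlgAut_apply] at hP
  refine ⟨m, by positivity, _, fun k => ⟨(hP.isStarProjection k).isSelfAdjoint,
    (hP.isStarProjection k).isIdempotentElem⟩, fun j k hjk => hP.pairwise_mul_eq_zero hjk,
    hP.sum_eq_one, fun k i => ?_⟩
  rw [mul_fiberProjection_mul_star_apply_self f k i (hU_normSq i), hf, Fintype.card_fin]
  rw [← Complex.ofReal_natCast, ← Complex.ofReal_mul, ← Complex.ofReal_sub, Complex.norm_real]
  exact (abs_mul_inv_sub_lt_inv hm (ha k)).trans hmε
end

section
/- Let N = 0·P_1 + 1·P_2 + i·P_3 where P_1 = diag(1,0,0), P_2 = diag(0,1,0), P_3 = diag(0,0,1) in M_3(ℂ), and let A_1 = diag(1/2,1/2,0), A_2 = diag(1/2,0,1/2), A_3 = diag(0,1/2,1/2). Then there is no unitary U ∈ M_3(ℂ) with E_3(U*P_kU) = A_k for all k = 1,2,3, where E_3 denotes the map taking a matrix to its diagonal part. -/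
open Matrix

/-- There is no unitary `U ∈ M₃(ℂ)` simultaneously carrying the diagonal
projections `P₁ = diag(1,0,0)`, `P₂ = diag(0,1,0)`, `P₃ = diag(0,0,1)` to
matrices whose diagonals are `(1/2,1/2,0)`, `(1/2,0,1/2)`, `(0,1/2,1/2)`
respectively. -/
theorem no_finite_dim_multivariate_carpenter
    (P A : Fin 3 → Matrix (Fin 3) (Fin 3) ℂ)
    (hP1 : P 0 = Matrix.diagonal ![1, 0, 0])
    (hP2 : P 1 = Matrix.diagonal ![0, 1, 0])
    (hP3 : P 2 = Matrix.diagonal ![0, 0, 1])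
    (hA1 : A 0 = Matrix.diagonal ![1 / 2, 1 / 2, 0])
    (hA2 : A 1 = Matrix.diagonal ![1 / 2, 0, 1 / 2])
    (hA3 : A 2 = Matrix.diagonal ![0, 1 / 2, 1 / 2]) :
    ¬ ∃ U ∈ Matrix.unitaryGroup (Fin 3) ℂ,
        ∀ k : Fin 3, ∀ j : Fin 3, (Uᴴ * P k * U) j j = A k j j := by
  rintro ⟨U, hU, h⟩
  have h02 := h 0 2
  have h11 := h 1 1
  have h00 := h 0 0
  have h10 := h 1 0
  rw [hP1, hA1] at h02 h00
  rw [hP2, hA2] at h11 h10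
  simp [Matrix.mul_apply, Fin.sum_univ_three, Matrix.diagonal] at h02 h11 h00 h10
  rw [Matrix.mem_unitaryGroup_iff] at hU
  have horth : (U * star U) 0 1 = (1 : Matrix (Fin 3) (Fin 3) ℂ) 0 1 := by rw [hU]
  simp [Matrix.mul_apply, Fin.sum_univ_three, h02, h11, Matrix.star_apply] at horth
  rcases horth with h1 | h2
  · rw [h1] at h00; norm_num at h00
  · rw [show U 1 0 = 0 from by simpa using congrArg (starRingEnd ℂ) h2] at h10
    norm_num at h10
end
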